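/- arXiv:1907.05368 — 4 statements merged into one kernel-verified Lean document; each statement's English description precedes it below -/
import Mathlib

section
/- Let w be a word over the alphabet {a, ā, b, b̄} (an element of the free monoid M on these four letters). Then the following are equivalent: (1) for every normal subgroup U of finite index in the free group F on the four free generators a, ā, b, b̄, there exists a word w' in the one-sided Dyck language D'₂* such that the images of w and w' in F lie in the same coset of U; (2) w belongs to the two-sided Dyck language D₂*. In other words, the closure of D'₂* in M, in the topology induced from the profinite topology on F, is exactly D₂*. -/
/-- The four-letter alphabet `{a, ā, b, b̄}`. -/
inductive Letter : Type
  | a | abar | b | bbar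
  deriving DecidableEq

/-- The "formal inverse" letter: `a ↦ ā`, `ā ↦ a`, `b ↦ b̄`, `b̄ ↦ b`. -/
def Letter.bar : Letter → Letter
  | .a => .abar
  | .abar => .a
  | .b => .bbar
  | .bbar => .b

/-- The free monoid `M` on the four letters. -/
abbrev M : Type := FreeMonoid Letter

/-- The free group `F` on the four free generators. -/
abbrev F : Type := FreeGroup Letter

/-- The canonical embedding `M → F`. -/
def emb : M →* F := FreeMonoid.lift (FreeGroup.of : Letter → F)

/-- The one-sided (restricted) Dyck language `D'₂*`: the smallest subset of `M`
containing the empty word, closed under concatenation and under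
`w ↦ a·w·ā` and `w ↦ b·w·b̄`. -/
inductive OneDyck : M → Prop
  | empty : OneDyck 1
  | mul {u v : M} : OneDyck u → OneDyck v → OneDyck (u * v)
  | brA {u : M} : OneDyck u →
      OneDyck (FreeMonoid.of Letter.a * u * FreeMonoid.of Letter.abar)
  | brB {u : M} : OneDyck u →
      OneDyck (FreeMonoid.of Letter.b * u * FreeMonoid.of Letter.bbar)

/-- One reduction step: deletion of an adjacent two-letter factor
`aā`, `āa`, `bb̄` or `b̄b`. -/
inductive PairDeletion : M → M → Prop
  | step (u v : M) (l : Letter) :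
      PairDeletion (u * FreeMonoid.of l * FreeMonoid.of l.bar * v) (u * v)

/-- The two-sided (unrestricted) Dyck language `D₂*`: words reducing to the
empty word by successive deletions of adjacent factors `aā`, `āa`, `bb̄`, `b̄b`. -/
def TwoDyck (w : M) : Prop := Relation.ReflTransGen PairDeletion w 1

/-- The two generators `x, y` of `F₂`. -/
inductive Gen : Type
  | x | y
  deriving DecidableEq

/-- The free group `F₂` on the two free generators `x, y`. -/
abbrev F₂ : Type := FreeGroup Gen

/-- The homomorphism `φ : F → F₂` with `φ(a) = x`, `φ(ā) = x⁻¹`,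
`φ(b) = y`, `φ(b̄) = y⁻¹`. -/
def phi : F →* F₂ := FreeGroup.lift fun l => match l with
  | .a => FreeGroup.of Gen.x
  | .abar => (FreeGroup.of Gen.x)⁻¹
  | .b => FreeGroup.of Gen.y
  | .bbar => (FreeGroup.of Gen.y)⁻¹

/-!
If `w` lies in the closure of `D'₂*`, then `φ w = 1` for the map `φ : F → F₂` identifying `ā`
with `a⁻¹` and `b̄` with `b⁻¹`: indeed `φ` kills `D'₂*`, and `F₂` is residually finite, as one sees
by letting a reduced word act on its own suffixes. The words killed by `φ` are those of `D₂*`,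
by free reduction.

Conversely, in a finite quotient of `F` the image `H` of `D'₂*` is a submonoid of a finite group,
hence a subgroup. From `aā ∈ H` and `a H ā ⊆ H` we get that `a` normalises `H`, because
`a h a⁻¹ = (a h ā)(aā)⁻¹`; then so does `ā = a⁻¹ (aā)`, and `āa`, the conjugate of `aā` by `a⁻¹`,
lies in `H`. So `H` contains every conjugate of every `l l̄`, hence the image of `D₂*`.
-/

theorem Equiv.Perm.exists_perm_subtype_eq_of_mem {α : Type*} (τ : Equiv.Perm α) (X : Set α)
    [Finite X] : ∃ σ : Equiv.Perm X, ∀ x : X, τ x ∈ X → (σ x : α) = τ x := by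
  classical
  let e : {x : X // τ x ∈ X} ≃ {y : X // τ⁻¹ y ∈ X} :=
    { toFun := fun x => ⟨⟨τ x, x.2⟩, by simp⟩
      invFun := fun y => ⟨⟨τ⁻¹ y, y.2⟩, by simp⟩
      left_inv := fun x => by simp
      right_inv := fun y => by simp }
  exact ⟨e.extendSubtype, fun x hx => by rw [e.extendSubtype_apply_of_mem x hx]; rfl⟩

namespace FreeGroup

variable {β : Type*}

theorem mk_cons (x : β × Bool) (L : List (β × Bool)) :
    mk (x :: L) = cond x.2 (of x.1) (of x.1)⁻¹ * mk L := by
  obtain ⟨z, _ | _⟩ := x <;> simp [of, inv_mk, invRev, mul_mk]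

theorem lift_mk_apply_one {X : Set (FreeGroup β)} (σ : β → Equiv.Perm X)
    (hσ : ∀ z (x : X), of z * (x : FreeGroup β) ∈ X → (σ z x : FreeGroup β) = of z * x)
    (L : List (β × Bool)) (hL : ∀ t ∈ L.tails, mk t ∈ X) :
    (lift σ (mk L) ⟨1, hL [] (by simp)⟩ : FreeGroup β) = mk L := by
  induction L with
  | nil => rfl
  | cons x L ih =>
    have hL' : ∀ t ∈ L.tails, mk t ∈ X := fun t ht => hL t (by simp [ht])
    have hxL : cond x.2 (of x.1) (of x.1)⁻¹ * mk L ∈ X := mk_cons x L ▸ hL _ (by simp)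
    have ih' : lift σ (mk L) ⟨1, _⟩ = ⟨mk L, hL' L (by simp)⟩ := Subtype.ext (ih hL')
    rw [mk_cons, MonoidHom.map_mul, Equiv.Perm.mul_apply, ih']
    obtain ⟨z, _ | _⟩ := x
    · simp only [cond_false] at hxL ⊢
      have hback : σ z ⟨_, hxL⟩ = ⟨mk L, hL' L (by simp)⟩ :=
        Subtype.ext ((hσ z _ (by simpa using hL' L (by simp))).trans (mul_inv_cancel_left _ _))
      rw [MonoidHom.map_inv, lift_apply_of, Equiv.Perm.inv_eq_iff_eq.mpr hback.symm]
    · simp only [cond_true, lift_apply_of] at hxL ⊢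
      exact hσ z _ hxL

instance residuallyFinite : Group.ResiduallyFinite (FreeGroup β) := by
  refine Group.residuallyFinite_of_forall_exists_finite_monoidHom fun g hg => ?_
  classical
  let X : Set (FreeGroup β) := {h | h ∈ g.toWord.tails.map mk}
  have : Finite X := List.finite_toSet _
  choose σ hσ using fun z => Equiv.Perm.exists_perm_subtype_eq_of_mem (Equiv.mulLeft (of z)) X
  refine ⟨Equiv.Perm X, inferInstance, inferInstance, lift σ, fun h => hg ?_⟩
  have hX : ∀ t ∈ g.toWord.tails, mk t ∈ X := fun t ht => List.mem_map_of_mem ht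
  have := lift_mk_apply_one σ (fun z x hx => hσ z x hx) g.toWord hX
  rw [mk_toWord, h] at this
  exact this.symm

end FreeGroup

section

variable {Q : Type*} [Group Q] {H : Subgroup Q} {t s : Q}

def Submonoid.toSubgroupOfFinite [Finite Q] (S : Submonoid Q) : Subgroup Q where
  toSubmonoid := S
  inv_mem' {x} hx :=
    Submonoid.powers_le.mpr hx (mem_powers_iff_mem_zpowers.mpr (inv_mem (Subgroup.mem_zpowers x)))

theorem Subgroup.mem_normalizer_of_mul_mul_mem [Finite Q] (hts : t * s ∈ H)
    (hH : ∀ x ∈ H, t * x * s ∈ H) : t ∈ normalizer (H : Set Q) :=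
  mem_normalizer_fintype fun x hx => by
    simpa [mul_assoc] using H.mul_mem (hH x hx) (H.inv_mem hts)

theorem Subgroup.mem_normalizer_of_mul_mem (ht : t ∈ normalizer (H : Set Q)) (hts : t * s ∈ H) :
    s ∈ normalizer (H : Set Q) := by
  simpa using mul_mem (inv_mem ht) (le_normalizer hts)

theorem Subgroup.mem_comm_of_mem_normalizer (ht : t ∈ normalizer (H : Set Q))
    (hts : t * s ∈ H) : s * t ∈ H := by
  simpa [mul_assoc] using (mem_normalizer_iff''.mp ht _).mp hts

end

def Letter.toGen : Letter → Gen × Bool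
  | .a => (.x, true)
  | .abar => (.x, false)
  | .b => (.y, true)
  | .bbar => (.y, false)

theorem Letter.toGen_injective : Function.Injective Letter.toGen := by
  intro l l' h
  cases l <;> cases l' <;> first | rfl | cases h

theorem Letter.toGen_bar (l : Letter) : l.bar.toGen = (l.toGen.1, !l.toGen.2) := by
  cases l <;> rfl

theorem phi_emb (w : M) : phi (emb w) = FreeGroup.mk (w.toList.map Letter.toGen) := by
  induction w using FreeMonoid.inductionOn' with
  | one => rfl
  | of_mul l w ih =>
    rw [map_mul, map_mul, ih, FreeMonoid.toList_of_mul, List.map_cons, ← List.singleton_append,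
      ← FreeGroup.mul_mk]
    congr 1
    cases l <;> simp [emb, phi, Letter.toGen, FreeGroup.of, FreeGroup.inv_mk, FreeGroup.invRev]

theorem phi_emb_eq_one_of_oneDyck {w : M} (h : OneDyck w) : phi (emb w) = 1 := by
  induction h with
  | empty => simp
  | mul _ _ ihu ihv => simp [ihu, ihv]
  | brA _ ih => simp only [map_mul, ih, mul_one]; simp [emb, phi]
  | brB _ ih => simp only [map_mul, ih, mul_one]; simp [emb, phi]

theorem exists_pairDeletion_of_step {w : M} {L : List (Gen × Bool)}
    (h : FreeGroup.Red.Step (w.toList.map Letter.toGen) L) :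
    ∃ w', PairDeletion w w' ∧ w'.toList.map Letter.toGen = L := by
  generalize hw : w.toList.map Letter.toGen = W at h
  obtain @⟨A, B, z, b⟩ := h
  obtain ⟨A', _, hw, rfl, hrest⟩ := List.map_eq_append_iff.mp hw
  obtain ⟨l, _, rfl, hl, hrest⟩ := List.map_eq_cons_iff.mp hrest
  obtain ⟨l', B', rfl, hl', rfl⟩ := List.map_eq_cons_iff.mp hrest
  obtain rfl : l' = l.bar := Letter.toGen_injective (by rw [hl', Letter.toGen_bar, hl])
  refine ⟨FreeMonoid.ofList A' * FreeMonoid.ofList B', ?_, by simp⟩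
  rw [← FreeMonoid.ofList_toList w, hw]
  simpa [FreeMonoid.ofList_append, mul_assoc] using
    PairDeletion.step (FreeMonoid.ofList A') (FreeMonoid.ofList B') l

theorem twoDyck_of_red {w : M} (h : FreeGroup.Red (w.toList.map Letter.toGen) []) :
    TwoDyck w := by
  generalize hL : w.toList.map Letter.toGen = L at h
  induction h using Relation.ReflTransGen.head_induction_on generalizing w with
  | refl =>
    obtain rfl : w = 1 := FreeMonoid.toList.injective (by simpa using hL)
    exact .refl
  | head hstep _ ih =>
    obtain ⟨w', hdel, hw'⟩ := exists_pairDeletion_of_step (hL ▸ hstep)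
    exact .head hdel (ih hw')

theorem twoDyck_of_phi_emb_eq_one {w : M} (h : phi (emb w) = 1) : TwoDyck w := by
  rw [phi_emb, FreeGroup.one_eq_mk, FreeGroup.Red.exact] at h
  obtain ⟨L, hred, hnil⟩ := h
  obtain rfl := FreeGroup.Red.nil_iff.mp hnil
  exact twoDyck_of_red hred

def oneDyckSubmonoid : Submonoid M where
  carrier := {w | OneDyck w}
  one_mem' := .empty
  mul_mem' := .mul

def Letter.IsOpening (l : Letter) : Prop :=
  ∀ u, OneDyck u → OneDyck (FreeMonoid.of l * u * FreeMonoid.of l.bar)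

theorem Letter.bar_bar (l : Letter) : l.bar.bar = l := by
  cases l <;> rfl

theorem Letter.exists_isOpening (l : Letter) :
    ∃ o : Letter, o.IsOpening ∧ (l = o ∨ l = o.bar) := by
  cases l
  exacts [⟨.a, fun _ => .brA, .inl rfl⟩, ⟨.a, fun _ => .brA, .inr rfl⟩,
    ⟨.b, fun _ => .brB, .inl rfl⟩, ⟨.b, fun _ => .brB, .inr rfl⟩]

section FiniteQuotient

variable {Q : Type*} [Group Q] [Finite Q] (π : M →* Q)

def dyckSubgroup : Subgroup Q := (oneDyckSubmonoid.map π).toSubgroupOfFinite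

local notation "N" => Subgroup.normalizer (dyckSubgroup π : Set Q)

theorem mem_dyckSubgroup {x : Q} : x ∈ dyckSubgroup π ↔ ∃ w, OneDyck w ∧ π w = x :=
  Submonoid.mem_map

variable {π} {l : Letter}

theorem Letter.IsOpening.map_mul_mul_mem_dyckSubgroup (hl : l.IsOpening) {x : Q}
    (hx : x ∈ dyckSubgroup π) :
    π (FreeMonoid.of l) * x * π (FreeMonoid.of l.bar) ∈ dyckSubgroup π := by
  obtain ⟨u, hu, rfl⟩ := (mem_dyckSubgroup π).mp hx
  exact (mem_dyckSubgroup π).mpr ⟨_, hl u hu, by simp⟩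

theorem Letter.IsOpening.map_mul_map_bar_mem_dyckSubgroup (hl : l.IsOpening) :
    π (FreeMonoid.of l) * π (FreeMonoid.of l.bar) ∈ dyckSubgroup π := by
  simpa using hl.map_mul_mul_mem_dyckSubgroup (dyckSubgroup π).one_mem

theorem Letter.IsOpening.map_mem_normalizer_dyckSubgroup (hl : l.IsOpening) :
    π (FreeMonoid.of l) ∈ N :=
  Subgroup.mem_normalizer_of_mul_mul_mem hl.map_mul_map_bar_mem_dyckSubgroup
    fun _ => hl.map_mul_mul_mem_dyckSubgroup

theorem map_of_mem_normalizer_dyckSubgroup (l : Letter) : π (FreeMonoid.of l) ∈ N := by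
  obtain ⟨o, ho, rfl | rfl⟩ := l.exists_isOpening
  · exact ho.map_mem_normalizer_dyckSubgroup
  · exact Subgroup.mem_normalizer_of_mul_mem ho.map_mem_normalizer_dyckSubgroup
      ho.map_mul_map_bar_mem_dyckSubgroup

theorem map_of_mul_map_of_bar_mem_dyckSubgroup (l : Letter) :
    π (FreeMonoid.of l) * π (FreeMonoid.of l.bar) ∈ dyckSubgroup π := by
  obtain ⟨o, ho, rfl | rfl⟩ := l.exists_isOpening
  · exact ho.map_mul_map_bar_mem_dyckSubgroup
  · rw [Letter.bar_bar]
    exact Subgroup.mem_comm_of_mem_normalizer ho.map_mem_normalizer_dyckSubgroup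
      ho.map_mul_map_bar_mem_dyckSubgroup

theorem map_mem_normalizer_dyckSubgroup (u : M) : π u ∈ N := by
  induction u using FreeMonoid.inductionOn' with
  | one => simp
  | of_mul l u ih => simpa using Subgroup.mul_mem _ (map_of_mem_normalizer_dyckSubgroup l) ih

theorem map_mem_dyckSubgroup_of_twoDyck {w : M} (h : TwoDyck w) : π w ∈ dyckSubgroup π := by
  induction h using Relation.ReflTransGen.head_induction_on with
  | refl => simp
  | head hstep _ ih =>
    obtain ⟨u, v, l⟩ := hstep
    have hconj := (Subgroup.mem_normalizer_iff.mp (map_mem_normalizer_dyckSubgroup (π := π) u) _).mp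
      (map_of_mul_map_of_bar_mem_dyckSubgroup l)
    simpa [mul_assoc] using (dyckSubgroup π).mul_mem hconj ih

end FiniteQuotient

/-- The closure of the one-sided Dyck language `D'₂*` in `M`, in the topology
induced from the profinite topology on `F`, is exactly the two-sided Dyck
language `D₂*`. -/
theorem closure_oneDyck_eq_twoDyck (w : M) :
    (∀ U : Subgroup F, U.Normal → U.FiniteIndex →
        ∃ w' : M, OneDyck w' ∧ (emb w)⁻¹ * emb w' ∈ U) ↔ TwoDyck w := by
  constructor
  · refine fun h => twoDyck_of_phi_emb_eq_one (by_contra fun hne => ?_)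
    obtain ⟨H, hH⟩ := Group.exists_finiteIndexNormalSubgroup_notMem _ hne
    let U := (H.comap phi).toSubgroup
    obtain ⟨w', hw', hmem⟩ := h U inferInstance inferInstance
    have hw'U : emb w' ∈ U := by
      show phi (emb w') ∈ H
      rw [phi_emb_eq_one_of_oneDyck hw']
      exact one_mem H
    exact hH (show emb w ∈ U by simpa using U.mul_mem hmem (U.inv_mem hw'U))
  · intro h U _ _
    obtain ⟨w', hw', hw'w⟩ :=
      (mem_dyckSubgroup _).mp
        (map_mem_dyckSubgroup_of_twoDyck (π := (QuotientGroup.mk' U).comp emb) h)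
    exact ⟨w', hw', QuotientGroup.eq.mp hw'w.symm⟩
end

section
/- Let w be a word in the two-sided Dyck language D₂* over the alphabet {a, ā, b, b̄}, and let U be any normal subgroup of finite index in the free group F on the four free generators a, ā, b, b̄. Then there exists a word w' in the one-sided Dyck language D'₂* such that the images of w and w' in F lie in the same coset of U. That is, D₂* is contained in the closure of D'₂* in the free monoid M in the topology induced from the profinite topology on F. -/
/-!
Fix a homomorphism `ρ : F → Q` to a finite group. The image `T` of `D'₂*` is a submonoid of a
finite group, hence a subgroup. For `t ∈ T` both `ρ(a) t ρ(ā)` and `ρ(aā)` lie in `T`, so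
conjugation by `ρ(a)` preserves `T`, and likewise for `b`; since `ρ(ā) = ρ(a)⁻¹ ρ(aā)`, the whole
of `ρ(F)` normalizes `T`. Hence `T` contains all conjugates of `ρ(l l̄)`, including
`ρ(āa) = ρ(a)⁻¹ ρ(aā) ρ(a)`, and the image of a two-sided Dyck word is a product of such
conjugates: `u l l̄ v = (u l l̄ u⁻¹)(u v)` in `F`.
-/

theorem OneDyck.bracket {l : Letter} (hl : l = .a ∨ l = .b) {u : M} (hu : OneDyck u) :
    OneDyck (FreeMonoid.of l * u * FreeMonoid.of l.bar) := by
  rcases hl with rfl | rfl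
  exacts [hu.brA, hu.brB]

theorem Subgroup.mem_closure_submonoid_of_finite {G : Type*} [Group G] [Finite G]
    (S : Submonoid G) {g : G} : g ∈ Subgroup.closure (S : Set G) ↔ g ∈ S := by
  rw [← Subgroup.mem_toSubmonoid, Subgroup.closure_toSubmonoid_of_finite, Submonoid.closure_eq]

section DyckImage

variable {Q : Type*} [Group Q] [Finite Q] (ρ : F →* Q)

def dyckImage : Subgroup Q :=
  Subgroup.closure (oneDyckSubmonoid.map (ρ.comp emb) : Set Q)

variable {ρ}

theorem mem_dyckImage {g : Q} : g ∈ dyckImage ρ ↔ ∃ w, OneDyck w ∧ ρ (emb w) = g :=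
  Subgroup.mem_closure_submonoid_of_finite _

theorem bracket_mem_dyckImage {l : Letter} (hl : l = .a ∨ l = .b) {t : Q}
    (ht : t ∈ dyckImage ρ) : ρ (.of l) * t * ρ (.of l.bar) ∈ dyckImage ρ := by
  obtain ⟨u, hu, rfl⟩ := mem_dyckImage.1 ht
  exact mem_dyckImage.2 ⟨_, hu.bracket hl, by simp [emb]⟩

theorem opening_pair_mem_dyckImage {l : Letter} (hl : l = .a ∨ l = .b) :
    ρ (.of l) * ρ (.of l.bar) ∈ dyckImage ρ := by
  simpa using bracket_mem_dyckImage hl (one_mem (dyckImage ρ))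

theorem opening_mem_normalizer_dyckImage {l : Letter} (hl : l = .a ∨ l = .b) :
    ρ (.of l) ∈ Subgroup.normalizer (dyckImage ρ : Set Q) := by
  refine Subgroup.mem_normalizer_fintype fun t ht => ?_
  have key := mul_mem (bracket_mem_dyckImage hl ht) (inv_mem (opening_pair_mem_dyckImage hl))
  rwa [mul_inv_rev, mul_assoc (ρ (.of l) * t), mul_inv_cancel_left] at key

theorem mem_normalizer_dyckImage (f : F) : ρ f ∈ Subgroup.normalizer (dyckImage ρ : Set Q) := by
  suffices (Subgroup.normalizer (dyckImage ρ : Set Q)).comap ρ = ⊤ from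
    (Subgroup.eq_top_iff' _).1 this f
  rw [eq_top_iff, ← FreeGroup.closure_range_of, Subgroup.closure_le]
  rintro _ ⟨l, rfl⟩
  have hbar {m : Letter} (hm : m = .a ∨ m = .b) :
      ρ (.of m.bar) ∈ Subgroup.normalizer (dyckImage ρ : Set Q) := by
    have hpair := Subgroup.le_normalizer (opening_pair_mem_dyckImage (ρ := ρ) hm)
    simpa using mul_mem (inv_mem (opening_mem_normalizer_dyckImage hm)) hpair
  cases l
  exacts [opening_mem_normalizer_dyckImage (.inl rfl), hbar (.inl rfl),
    opening_mem_normalizer_dyckImage (.inr rfl), hbar (.inr rfl)]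

theorem conj_mem_dyckImage (f : F) {t : Q} (ht : t ∈ dyckImage ρ) :
    ρ f * t * (ρ f)⁻¹ ∈ dyckImage ρ :=
  (Subgroup.mem_normalizer_iff.1 (mem_normalizer_dyckImage f) t).1 ht

theorem pair_mem_dyckImage (l : Letter) : ρ (.of l) * ρ (.of l.bar) ∈ dyckImage ρ := by
  have closing {m : Letter} (hm : m = .a ∨ m = .b) :
      ρ (.of m.bar) * ρ (.of m.bar.bar) ∈ dyckImage ρ := by
    have := conj_mem_dyckImage (.of m)⁻¹ (opening_pair_mem_dyckImage (ρ := ρ) hm)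
    rcases hm with rfl | rfl <;> simpa [Letter.bar, mul_assoc] using this
  cases l
  exacts [opening_pair_mem_dyckImage (.inl rfl), closing (.inl rfl),
    opening_pair_mem_dyckImage (.inr rfl), closing (.inr rfl)]

theorem mem_dyckImage_of_pairDeletion {w w' : M} (h : PairDeletion w w')
    (hw' : ρ (emb w') ∈ dyckImage ρ) : ρ (emb w) ∈ dyckImage ρ := by
  obtain ⟨u, v, l⟩ := h
  have key : ρ (emb (u * .of l * .of l.bar * v))
      = ρ (emb u) * (ρ (.of l) * ρ (.of l.bar)) * (ρ (emb u))⁻¹ * ρ (emb (u * v)) := by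
    simp only [map_mul, emb, FreeMonoid.lift_eval_of]
    group
  rw [key]
  exact mul_mem (conj_mem_dyckImage _ (pair_mem_dyckImage l)) hw'

theorem mem_dyckImage_of_twoDyck {w : M} (hw : TwoDyck w) : ρ (emb w) ∈ dyckImage ρ := by
  induction hw using Relation.ReflTransGen.head_induction_on with
  | refl => simp [one_mem]
  | head h _ ih => exact mem_dyckImage_of_pairDeletion h ih

end DyckImage

/-- Every two-sided Dyck word lies in the closure of the one-sided Dyck
language `D'₂*` in `M`, in the topology induced from the profinite topology
on `F`. -/
theorem twoDyck_subset_closure_oneDyck (w : M) (hw : TwoDyck w)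
    (U : Subgroup F) (hN : U.Normal) (hFI : U.FiniteIndex) :
    ∃ w' : M, OneDyck w' ∧ (emb w)⁻¹ * emb w' ∈ U := by
  have : Finite (F ⧸ U) := Subgroup.finite_quotient_of_finiteIndex
  obtain ⟨w', hw', heq⟩ :=
    mem_dyckImage.1 (mem_dyckImage_of_twoDyck (ρ := QuotientGroup.mk' U) hw)
  exact ⟨w', hw', QuotientGroup.eq.1 heq.symm⟩
end

section
/- Let F be the free group on the four free generators a, ā, b, b̄, and let U be a normal subgroup of finite index in F. Then there exists an integer n ≥ 1 such that in F the elements (ā·a)·a^(n-1)·ā^(n-1) and (b̄·b)·b^(n-1)·b̄^(n-1) both belong to U. Consequently, the monoid word āa is congruent modulo U to the inverse of the image of the one-sided Dyck word a^(n-1)ā^(n-1), and the monoid word b̄b is congruent modulo U to the inverse of the image of the one-sided Dyck word b^(n-1)b̄^(n-1). -/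
/-- For every finite-index normal subgroup `U` of `F` there is `n ≥ 1` with
`(āa)·aⁿ⁻¹āⁿ⁻¹ ∈ U` and `(b̄b)·bⁿ⁻¹b̄ⁿ⁻¹ ∈ U`; that is, `āa` and `b̄b` are
congruent mod `U` to inverses of one-sided Dyck words. -/
theorem abar_a_congruent_oneDyck (U : Subgroup F) (hN : U.Normal)
    (hFI : U.FiniteIndex) :
    ∃ n : ℕ, 1 ≤ n ∧
      emb (FreeMonoid.of Letter.abar * FreeMonoid.of Letter.a) *
        emb ((FreeMonoid.of Letter.a) ^ (n - 1) *
          (FreeMonoid.of Letter.abar) ^ (n - 1)) ∈ U ∧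
      emb (FreeMonoid.of Letter.bbar * FreeMonoid.of Letter.b) *
        emb ((FreeMonoid.of Letter.b) ^ (n - 1) *
          (FreeMonoid.of Letter.bbar) ^ (n - 1)) ∈ U := by
  have hn : U.index ≠ 0 := hFI.index_ne_zero
  obtain ⟨m, hm⟩ : ∃ m, U.index = m + 1 := ⟨U.index - 1, (Nat.succ_pred_eq_of_pos (Nat.pos_of_ne_zero hn)).symm⟩
  refine ⟨m + 1, Nat.le_add_left 1 m, ?_, ?_⟩ <;>
  · simp only [Nat.add_sub_cancel, map_mul, map_pow, emb, FreeMonoid.lift_eval_of]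
    have key : ∀ A B : F, B * A * (A ^ m * B ^ m) =
        (B * A ^ (m + 1) * B⁻¹) * B ^ (m + 1) := by intro A B; group
    rw [key]
    exact U.mul_mem (hN.conj_mem _ (hm ▸ U.pow_index_mem _) _) (hm ▸ U.pow_index_mem _)
end

section
/- Let F be the free group on the four free generators a, ā, b, b̄, and let U be a normal subgroup of finite index in F. Then the image in F of the two-sided Dyck language D₂* is contained in ⟨D'₂*⟩·U, where ⟨D'₂*⟩ denotes the subgroup of F generated by the images of the words of the one-sided Dyck language D'₂*. -/
/-!
Put `K = ⟨D'₂*⟩ ⊔ U`; as `U` is normal, `K = ⟨D'₂*⟩·U`. For `l ∈ {a, b}` and a one-sided Dyck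
word `v`, `l·v·l⁻¹ = (l v l̄)(l l̄)⁻¹`, so conjugation by `l` maps `K` into itself. Since `U ≤ K`
has finite index, some power `lⁿ` (`n > 0`) lies in `K`, so conjugation by `l⁻¹ = lⁿ⁻¹·l⁻ⁿ`
maps `K` into itself too: `l` normalizes `K`. Then so do `ā = a⁻¹·(aā)` and `b̄ = b⁻¹·(bb̄)`,
hence `K` is normal. In `F ⧸ K` every pair `l l̄` becomes trivial, so every word of `D₂*`,
which reduces to the empty word by deleting such pairs, maps into `K`.
-/

open Subgroup

section Normalizer

variable {G : Type*} [Group G] {H : Subgroup G} {g : G}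

theorem Subgroup.conj_pow_mem_of_conj_mem (hg : ∀ h ∈ H, g * h * g⁻¹ ∈ H) (k : ℕ) {h : G}
    (hh : h ∈ H) : g ^ k * h * (g ^ k)⁻¹ ∈ H := by
  induction k with
  | zero => simpa using hh
  | succ k ih =>
    have key : g ^ (k + 1) * h * (g ^ (k + 1))⁻¹ = g * (g ^ k * h * (g ^ k)⁻¹) * g⁻¹ := by
      group
    exact key ▸ hg _ ih

theorem Subgroup.mem_normalizer_of_conj_mem_of_pow_mem (hg : ∀ h ∈ H, g * h * g⁻¹ ∈ H)
    {n : ℕ} (hn : n ≠ 0) (hpow : g ^ n ∈ H) : g ∈ normalizer (H : Set G) := by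
  obtain ⟨m, rfl⟩ := Nat.exists_eq_succ_of_ne_zero hn
  refine mem_normalizer_iff''.mpr fun h ↦ ⟨fun hh ↦ ?_, fun hh ↦ ?_⟩
  · have key : g⁻¹ * h * g = g ^ m * ((g ^ (m + 1))⁻¹ * h * g ^ (m + 1)) * (g ^ m)⁻¹ := by
      group
    rw [key]
    exact conj_pow_mem_of_conj_mem hg m (mul_mem (mul_mem (inv_mem hpow) hh) hpow)
  · simpa [mul_assoc] using hg _ hh

end Normalizer

theorem TwoDyck.map_eq_one {N : Type*} [Monoid N] (f : M →* N)
    (hf : ∀ l, f (.of l) * f (.of l.bar) = 1) {w : M} (hw : TwoDyck w) : f w = 1 := by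
  have step : ∀ {w w'}, PairDeletion w w' → f w = f w' := by
    rintro _ _ ⟨u, v, l⟩
    simp only [map_mul]
    rw [mul_assoc (f u), hf, mul_one]
  induction hw using Relation.ReflTransGen.head_induction_on with
  | refl => exact map_one f
  | head h _ ih => exact (step h).trans ih

def oneDyckSpan : Subgroup F := closure (emb '' {w | OneDyck w})

theorem emb_mem_oneDyckSpan {w : M} (hw : OneDyck w) : emb w ∈ oneDyckSpan :=
  subset_closure ⟨w, hw, rfl⟩

section OneDyckSpanSup

variable {U : Subgroup F} {l : Letter}
  (hbr : ∀ u, OneDyck u → OneDyck (.of l * u * .of l.bar))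

include hbr

theorem of_mul_of_bar_mem_oneDyckSpan :
    FreeGroup.of l * FreeGroup.of l.bar ∈ oneDyckSpan := by
  simpa [emb] using emb_mem_oneDyckSpan (hbr 1 .empty)

theorem conj_of_mem_oneDyckSpan_sup (hU : U.Normal) {g : F} (hg : g ∈ oneDyckSpan ⊔ U) :
    FreeGroup.of l * g * (FreeGroup.of l)⁻¹ ∈ oneDyckSpan ⊔ U := by
  suffices oneDyckSpan ⊔ U ≤ (oneDyckSpan ⊔ U).comap (MulAut.conj (FreeGroup.of l)) from this hg
  refine sup_le ((closure_le _).mpr ?_) fun u hu ↦ mem_sup_right (hU.conj_mem u hu _)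
  rintro _ ⟨v, hv, rfl⟩
  have key : FreeGroup.of l * emb v * (FreeGroup.of l)⁻¹ =
      emb (.of l * v * .of l.bar) * (FreeGroup.of l * FreeGroup.of l.bar)⁻¹ := by
    simp only [map_mul, emb, FreeMonoid.lift_eval_of]
    group
  change FreeGroup.of l * emb v * (FreeGroup.of l)⁻¹ ∈ oneDyckSpan ⊔ U
  rw [key]
  exact mul_mem (mem_sup_left (emb_mem_oneDyckSpan (hbr v hv)))
    (inv_mem (mem_sup_left (of_mul_of_bar_mem_oneDyckSpan hbr)))

theorem of_mem_normalizer_oneDyckSpan_sup (hU : U.Normal) (hFI : U.FiniteIndex) :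
    FreeGroup.of l ∈ normalizer ((oneDyckSpan ⊔ U : Subgroup F) : Set F) :=
  mem_normalizer_of_conj_mem_of_pow_mem (fun _ ↦ conj_of_mem_oneDyckSpan_sup hbr hU)
    hFI.index_ne_zero (mem_sup_right (U.pow_index_mem _))

theorem of_bar_mem_normalizer_oneDyckSpan_sup (hU : U.Normal) (hFI : U.FiniteIndex) :
    FreeGroup.of l.bar ∈ normalizer ((oneDyckSpan ⊔ U : Subgroup F) : Set F) := by
  have key : FreeGroup.of l.bar = (FreeGroup.of l)⁻¹ * (FreeGroup.of l * FreeGroup.of l.bar) := by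
    group
  rw [key]
  exact mul_mem (inv_mem (of_mem_normalizer_oneDyckSpan_sup hbr hU hFI))
    (le_normalizer (mem_sup_left (of_mul_of_bar_mem_oneDyckSpan hbr)))

end OneDyckSpanSup

theorem oneDyckSpan_sup_normal {U : Subgroup F} (hU : U.Normal) (hFI : U.FiniteIndex) :
    (oneDyckSpan ⊔ U).Normal := by
  have brA : ∀ u, OneDyck u → OneDyck (.of .a * u * .of Letter.a.bar) := fun _ ↦ .brA
  have brB : ∀ u, OneDyck u → OneDyck (.of .b * u * .of Letter.b.bar) := fun _ ↦ .brB
  rw [← normalizer_eq_top_iff, eq_top_iff, ← FreeGroup.closure_range_of, closure_le]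
  rintro _ ⟨l, rfl⟩
  cases l with
  | a => exact of_mem_normalizer_oneDyckSpan_sup brA hU hFI
  | abar => exact of_bar_mem_normalizer_oneDyckSpan_sup brA hU hFI
  | b => exact of_mem_normalizer_oneDyckSpan_sup brB hU hFI
  | bbar => exact of_bar_mem_normalizer_oneDyckSpan_sup brB hU hFI

theorem emb_mem_oneDyckSpan_sup {U : Subgroup F} (hU : U.Normal) (hFI : U.FiniteIndex) {w : M}
    (hw : TwoDyck w) : emb w ∈ oneDyckSpan ⊔ U := by
  have hK := oneDyckSpan_sup_normal hU hFI
  have pair_a : FreeGroup.of Letter.a * FreeGroup.of Letter.abar ∈ oneDyckSpan ⊔ U :=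
    mem_sup_left (of_mul_of_bar_mem_oneDyckSpan fun _ ↦ .brA)
  have pair_b : FreeGroup.of Letter.b * FreeGroup.of Letter.bbar ∈ oneDyckSpan ⊔ U :=
    mem_sup_left (of_mul_of_bar_mem_oneDyckSpan fun _ ↦ .brB)
  rw [← QuotientGroup.eq_one_iff (N := oneDyckSpan ⊔ U)]
  refine TwoDyck.map_eq_one ((QuotientGroup.mk' _).comp emb) (fun l ↦ ?_) hw
  simp only [MonoidHom.comp_apply, emb, FreeMonoid.lift_eval_of, QuotientGroup.mk'_apply,
    ← QuotientGroup.mk_mul, QuotientGroup.eq_one_iff]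
  cases l with
  | a => exact pair_a
  | abar => exact hK.mem_comm pair_a
  | b => exact pair_b
  | bbar => exact hK.mem_comm pair_b

/-- For every finite-index normal subgroup `U` of `F`, the image in `F` of the
two-sided Dyck language is contained in `⟨D'₂*⟩·U`, where `⟨D'₂*⟩` is the
subgroup of `F` generated by the images of the one-sided Dyck words. -/
theorem twoDyck_subset_oneDyck_span_mul (U : Subgroup F) (hN : U.Normal)
    (hFI : U.FiniteIndex) (w : M) (hw : TwoDyck w) :
    ∃ s u : F, s ∈ Subgroup.closure (emb '' {w' : M | OneDyck w'}) ∧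
      u ∈ U ∧ emb w = s * u := by
  obtain ⟨s, hs, u, hu, hsu⟩ := mem_sup_of_normal_right.mp (emb_mem_oneDyckSpan_sup hN hFI hw)
  exact ⟨s, u, hs, hu, hsu.symm⟩
end
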